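/- Let A = (q_A, ε_A, b_A) and B = (q_B, ε_B, b_B) be two buyer types with 0 < b_A ≤ b_B < 1, 0 < ε_A < q_A, 0 < ε_B < q_B, whose knees satisfy the monotonicity condition x_A* ≤ x_B*, where x* = min((q − ε)/b, ε/(1 − b)). Let (x', p') with x' > 0, p' ≥ 0 be a contract acceptable to both types, and let (x, p) be a contract with x > x' and p ≥ 0. If the lower type weakly prefers (x, p), i.e., C_A(x, p) ≤ C_A(x', p'), then so does the higher type: C_B(x, p) ≤ C_B(x', p'). (Consequently, in any incentive-compatible contract set under the monotonicity condition, the bandwidths assigned to types with larger b cannot be smaller.) -/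
import Mathlib


/-- Expected loss of a type-(q, ε, b) buyer purchasing y units of deterministic
service and x units of stochastic service. -/
noncomputable def eLoss (q b y x : ℝ) : ℝ :=
  b * max (q - y - x) 0 + (1 - b) * max (q - y) 0

/-- A contract (x, p) is acceptable to a type-(q, ε, b) buyer. -/
def acceptable (q ε b x p : ℝ) : Prop :=
  ∃ y, 0 ≤ y ∧ eLoss q b y x ≤ ε ∧ y + x * p ≤ q - ε

/-- The cost of a contract (x, p) to a type-(q, ε, b) buyer. -/
noncomputable def cost (q ε b x p : ℝ) : ℝ :=
  sInf {z | ∃ y, 0 ≤ y ∧ eLoss q b y x ≤ ε ∧ z = y + x * p}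

/-- The knee of a type-(q, ε, b) buyer's acceptance region. -/
noncomputable def knee (q ε b : ℝ) : ℝ :=
  min ((q - ε) / b) (ε / (1 - b))

/-- The equivalent-price function of a type-(q, ε, b) buyer. -/
noncomputable def eqPrice (q ε b x' p' x : ℝ) : ℝ :=
  if x ≤ knee q ε b ∧ x' ≤ knee q ε b then b - (x' / x) * (b - p')
  else if knee q ε b ≤ x ∧ knee q ε b ≤ x' then x' * p' / x
  else if x' < knee q ε b ∧ knee q ε b < x then (b * (knee q ε b - x') + x' * p') / x
  else b - (knee q ε b * b - x' * p') / x

lemma cost_eq (q ε b x p : ℝ) (hb0 : 0 < b) (hb1 : b < 1) (hε : 0 < ε) (hq : ε < q)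
    (hx : 0 ≤ x) (hp : 0 ≤ p) :
    cost q ε b x p = q - ε - b * min x (knee q ε b) + x * p := by
  have hb1' : 0 < 1 - b := by linarith
  have hkdef : knee q ε b = min ((q - ε) / b) (ε / (1 - b)) := rfl
  set k := knee q ε b with hk
  have hke : k ≤ ε / (1 - b) := by rw [hkdef]; exact min_le_right _ _
  have hkq : k ≤ (q - ε) / b := by rw [hkdef]; exact min_le_left _ _
  have hk0 : 0 < k := by
    rw [hkdef]; exact lt_min (div_pos (by linarith) hb0) (div_pos hε hb1')
  have hbk : b * k ≤ q - ε := by rw [le_div_iff₀ hb0] at hkq; linarith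
  have hek : (1 - b) * k ≤ ε := by rw [le_div_iff₀ hb1'] at hke; linarith
  have hmin0 : 0 ≤ min x k := le_min hx hk0.le
  have hminx : min x k ≤ x := min_le_left _ _
  have hmink : min x k ≤ k := min_le_right _ _
  have hbm : b * min x k ≤ b * k := mul_le_mul_of_nonneg_left hmink hb0.le
  have hbmx : b * min x k ≤ b * x := mul_le_mul_of_nonneg_left hminx hb0.le
  have hbm0 : 0 ≤ b * min x k := mul_nonneg hb0.le hmin0
  have h0 : 0 ≤ q - ε - b * min x k := by linarith
  have hii : eLoss q b (q - ε - b * min x k) x ≤ ε := by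
    unfold eLoss
    have hq0 : max (q - (q - ε - b * min x k)) 0 = q - (q - ε - b * min x k) :=
      max_eq_left (by linarith)
    have hA1 : (1 - b) * min x k ≤ ε :=
      le_trans (mul_le_mul_of_nonneg_left hmink hb1'.le) hek
    have hA2 : b * ((1 - b) * min x k) ≤ b * ε := mul_le_mul_of_nonneg_left hA1 hb0.le
    rcases le_total (q - (q - ε - b * min x k) - x) 0 with h|h
    · rw [max_eq_right h, hq0]; nlinarith
    · rw [max_eq_left h, hq0]; nlinarith
  have hlow : ∀ y, 0 ≤ y → eLoss q b y x ≤ ε → q - ε - b * min x k ≤ y := by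
    intro y hy hL
    unfold eLoss at hL
    have m1 : b * (q - y - x) ≤ b * max (q - y - x) 0 :=
      mul_le_mul_of_nonneg_left (le_max_left _ _) hb0.le
    have m2 : (1 - b) * (q - y) ≤ (1 - b) * max (q - y) 0 :=
      mul_le_mul_of_nonneg_left (le_max_left _ _) hb1'.le
    have m3 : 0 ≤ b * max (q - y - x) 0 := mul_nonneg hb0.le (le_max_right _ _)
    have h1 : q - y - b * x ≤ ε := by nlinarith
    have h2 : (1 - b) * (q - y) ≤ ε := by linarith
    rcases le_total x k with hxk|hxk
    · rw [min_eq_left hxk]; linarith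
    · rw [min_eq_right hxk]
      rcases le_total (ε / (1 - b)) ((q - ε) / b) with hc|hc
      · have hkeq : k = ε / (1 - b) := by rw [hkdef]; exact min_eq_right hc
        have he : (1 - b) * k = ε := by rw [hkeq]; field_simp
        have h3 : q - y ≤ k := le_of_mul_le_mul_left (by linarith) hb1'
        linarith
      · have hkeq : k = (q - ε) / b := by rw [hkdef]; exact min_eq_left hc
        have he : b * k = q - ε := by rw [hkeq]; field_simp
        linarith
  unfold cost
  have hmem : (q - ε - b * min x k) + x * p ∈
      {z | ∃ y, 0 ≤ y ∧ eLoss q b y x ≤ ε ∧ z = y + x * p} := ⟨_, h0, hii, rfl⟩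
  have hlb : ∀ z ∈ {z | ∃ y, 0 ≤ y ∧ eLoss q b y x ≤ ε ∧ z = y + x * p},
      (q - ε - b * min x k) + x * p ≤ z := by
    rintro z ⟨y, hy, hL, rfl⟩
    have := hlow y hy hL
    linarith
  have : sInf {z | ∃ y, 0 ≤ y ∧ eLoss q b y x ≤ ε ∧ z = y + x * p}
      = (q - ε - b * min x k) + x * p :=
    le_antisymm (csInf_le ⟨_, fun z hz => hlb z hz⟩ hmem) (le_csInf ⟨_, hmem⟩ hlb)
  rw [this]

/-- Under the monotonicity condition, if the lower type A weakly
prefers a larger-bandwidth contract (x, p) over (x', p'), then so does the higher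
type B. -/
theorem stmt15 (qA εA bA qB εB bB x' p' x p : ℝ)
    (hbA0 : 0 < bA) (hbA1 : bA < 1) (hbB0 : 0 < bB) (hbB1 : bB < 1) (hbAB : bA ≤ bB)
    (hεA : 0 < εA) (hqA : εA < qA) (hεB : 0 < εB) (hqB : εB < qB)
    (hMC : knee qA εA bA ≤ knee qB εB bB)
    (hx' : 0 < x') (hp' : 0 ≤ p')
    (haccA : acceptable qA εA bA x' p') (haccB : acceptable qB εB bB x' p')
    (hx : x' < x) (hp : 0 ≤ p)
    (hA : cost qA εA bA x p ≤ cost qA εA bA x' p') :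
    cost qB εB bB x p ≤ cost qB εB bB x' p' := by
  have hx0 : (0:ℝ) < x := hx'.trans hx
  rw [cost_eq qA εA bA x p hbA0 hbA1 hεA hqA hx0.le hp,
      cost_eq qA εA bA x' p' hbA0 hbA1 hεA hqA hx'.le hp'] at hA
  rw [cost_eq qB εB bB x p hbB0 hbB1 hεB hqB hx0.le hp,
      cost_eq qB εB bB x' p' hbB0 hbB1 hεB hqB hx'.le hp']
  set kA := knee qA εA bA
  set kB := knee qB εB bB
  have h1 : min x kA - min x' kA ≤ min x kB - min x' kB := by
    rcases min_cases x kA with ⟨e1,f1⟩|⟨e1,f1⟩ <;>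
    rcases min_cases x' kA with ⟨e2,f2⟩|⟨e2,f2⟩ <;>
    rcases min_cases x kB with ⟨e3,f3⟩|⟨e3,f3⟩ <;>
    rcases min_cases x' kB with ⟨e4,f4⟩|⟨e4,f4⟩ <;> linarith
  have h2 : 0 ≤ min x kA - min x' kA := by
    have := min_le_min hx.le (le_refl kA); linarith
  have key : bA * (min x kA - min x' kA) ≤ bB * (min x kB - min x' kB) :=
    le_trans (mul_le_mul_of_nonneg_right hbAB h2)
      (mul_le_mul_of_nonneg_left h1 hbB0.le)
  rw [mul_sub, mul_sub] at key
  linarith
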